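/- arXiv:1811.06640 — 2 statements merged into one kernel-verified Lean document; each statement's English description precedes it below -/
import Mathlib

section
/- Let w be a scalar with |w| > 1, N ∈ ℕ, and x₁,…,x_N arbitrary scalars. Define the sequence x by x_{mN+j} = w^{-[(mN+j−1)+(mN+j−2)+⋯+j]} x_j for m ∈ ℤ₊ and j = 1,…,N. Then x ∈ c₀, x ∈ D(A^N), and A^N x = x; that is, x is a periodic point of A in c₀. -/
/-!
Iterating the weighted backward shift gives `(Aⁿx)_k = w^{(k+1)+⋯+(k+n)} x_{k+n}`. Moving from
block `m` to block `m+1` adds exactly the `N` exponents `mN+j+1, …, mN+j+N` to the exponent of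
`w⁻¹` in the definition of `x`, so `A^N` cancels them and `A^N x = x`. For decay, the exponent at
index `k` is at least `k - N`, so `‖x_k‖ ≤ (max_j ‖c_j‖) ‖w‖^{-(k-N)} → 0`.
-/

open Filter Finset

lemma iterate_weightedShift_apply {R : Type*} [Monoid R] (w : R)
    (A : (ℕ → R) → ℕ → R) (hA : ∀ x k, A x k = w ^ (k + 1) * x (k + 1)) (x : ℕ → R) (n : ℕ) :
    ∀ k, A^[n] x k = w ^ (∑ t ∈ range n, (k + 1 + t)) * x (k + n) := by
  induction n with
  | zero => simp
  | succ n ih =>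
    intro k
    have hsum : ∑ t ∈ range (n + 1), (k + 1 + t) = (k + 1) + ∑ t ∈ range n, (k + 1 + 1 + t) := by
      rw [sum_range_succ', add_comm]
      exact congrArg₂ _ rfl (sum_congr rfl fun t _ => by omega)
    rw [Function.iterate_succ_apply', hA, ih, hsum, pow_add w (k + 1), mul_assoc, add_assoc k 1 n,
      add_comm 1 n]

lemma exists_mul_add_fin_eq {N : ℕ} (hN : 0 < N) (k : ℕ) : ∃ (m : ℕ) (j : Fin N), m * N + j = k :=
  ⟨k / N, ⟨k % N, Nat.mod_lt k hN⟩, Nat.div_add_mod' k N⟩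

lemma le_sum_range_add_succ (n j : ℕ) : n ≤ ∑ t ∈ range n, (j + 1 + t) := by
  simpa using card_nsmul_le_sum (range n) (fun t => j + 1 + t) 1 fun t _ => by omega

section Blockwise

variable {𝕜 : Type*} {N : ℕ} {c : Fin N → 𝕜} {x : ℕ → 𝕜} {w : 𝕜}

lemma iterate_weightedShift_eq_self_of_blockwise [DivisionRing 𝕜] (hw : w ≠ 0)
    (A : (ℕ → 𝕜) → ℕ → 𝕜) (hA : ∀ x k, A x k = w ^ (k + 1) * x (k + 1)) (hN : 0 < N)
    (hx : ∀ (m : ℕ) (j : Fin N), x (m * N + ↑j) = w⁻¹ ^ (∑ t ∈ range (m * N), (↑j + 1 + t)) * c j) :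
    A^[N] x = x := by
  funext k
  obtain ⟨m, j, rfl⟩ := exists_mul_add_fin_eq hN k
  have hnext : m * N + j + N = (m + 1) * N + j := by ring
  have hsplit : ∑ t ∈ range ((m + 1) * N), (↑j + 1 + t)
      = ∑ t ∈ range N, (m * N + j + 1 + t) + ∑ t ∈ range (m * N), (↑j + 1 + t) := by
    rw [add_mul, one_mul, sum_range_add, add_comm]
    exact congrArg₂ _ (sum_congr rfl fun t _ => by ring) rfl
  rw [iterate_weightedShift_apply w A hA, hnext, hx, hx, hsplit, pow_add, ← mul_assoc, ← mul_assoc,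
    inv_pow, mul_inv_cancel₀ (pow_ne_zero _ hw), one_mul]

lemma tendsto_zero_of_blockwise [NormedDivisionRing 𝕜] (hw : 1 < ‖w‖) (hN : 0 < N)
    (hx : ∀ (m : ℕ) (j : Fin N), x (m * N + ↑j) = w⁻¹ ^ (∑ t ∈ range (m * N), (↑j + 1 + t)) * c j) :
    Tendsto x atTop (nhds 0) := by
  have hr₀ : 0 ≤ ‖w‖⁻¹ := inv_nonneg.mpr (norm_nonneg w)
  have hr₁ : ‖w‖⁻¹ < 1 := inv_lt_one_of_one_lt₀ hw
  obtain ⟨M, hM⟩ := Finite.exists_le fun j => ‖c j‖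
  have hbound : ∀ k, ‖x k‖ ≤ ‖w‖⁻¹ ^ (k - N) * M := by
    intro k
    obtain ⟨m, j, rfl⟩ := exists_mul_add_fin_eq hN k
    have hexp : m * N + j - N ≤ ∑ t ∈ range (m * N), (↑j + 1 + t) :=
      (by omega : m * N + j - N ≤ m * N).trans (le_sum_range_add_succ _ _)
    rw [hx, norm_mul, norm_pow, norm_inv]
    exact mul_le_mul (pow_le_pow_of_le_one hr₀ hr₁.le hexp) (hM j) (norm_nonneg _) (by positivity)
  have hgeom : Tendsto (fun k => ‖w‖⁻¹ ^ (k - N) * M) atTop (nhds 0) := by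
    simpa using ((tendsto_pow_atTop_nhds_zero_of_lt_one hr₀ hr₁).comp
      (tendsto_sub_atTop_nat N)).mul_const M
  exact tendsto_zero_iff_norm_tendsto_zero.mpr (squeeze_zero (fun _ => norm_nonneg _) hbound hgeom)

end Blockwise

/-- Let `|w| > 1`, `N ≥ 1`, and let `c 0, …, c (N-1)` be arbitrary
scalars. The sequence `x` defined blockwise (0-based) by
`x (m*N + j) = w^{-[(mN+j-1)+(mN+j-2)+⋯+(j+1)]} * c j` for `m ∈ ℤ₊`, `j < N`
(the paper's `x_{mN+j} = w^{-[(mN+j-1)+⋯+j]} x_j`, 1-based) belongs to `c₀`,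
lies in `D(A^N)`, and satisfies `A^N x = x`, i.e. `x` is a periodic point in `c₀` of
the weighted backward shift `A` (0-based: `A x k = w ^ (k+1) * x (k+1)`). -/
theorem rolewicz_c0_periodic_point {𝕜 : Type*} [RCLike 𝕜]
    (w : 𝕜) (hw : 1 < ‖w‖)
    (A : (ℕ → 𝕜) → ℕ → 𝕜) (hA : ∀ x k, A x k = w ^ (k + 1) * x (k + 1))
    (N : ℕ) (hN : 0 < N) (c : Fin N → 𝕜)
    (x : ℕ → 𝕜)
    (hx : ∀ (m : ℕ) (j : Fin N),
      x (m * N + ↑j) = w⁻¹ ^ (∑ t ∈ Finset.range (m * N), (↑j + 1 + t)) * c j) :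
    Filter.Tendsto x Filter.atTop (nhds 0) ∧
    Filter.Tendsto (A^[N] x) Filter.atTop (nhds 0) ∧
    A^[N] x = x := by
  have hw₀ : w ≠ 0 := norm_pos_iff.mp (one_pos.trans hw)
  have hfix := iterate_weightedShift_eq_self_of_blockwise hw₀ A hA hN hx
  have hdecay := tendsto_zero_of_blockwise hw hN hx
  exact ⟨hdecay, by rwa [hfix], hfix⟩
end

section
/- Let w ∈ ℂ with |w| > 1, 1 ≤ p < ∞, and λ ∈ ℂ. If x ∈ D(A) satisfies Ax = λx, then x_k = x₁ · λ^{k−1} / w^{k(k−1)/2} for all k ∈ ℕ (with 0⁰ := 1); hence the eigenspace of A associated with λ is the one-dimensional subspace of ℓ^p spanned by the sequence (λ^{k−1} / w^{k(k−1)/2})_{k∈ℕ}. -/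
/-!
Sequences are indexed from `0`, so `x k` is the paper's `x_{k+1}`.

The eigenvalue equation `Ax = λx` says `w ^ (k + 1) * x (k + 1) = λ * x k` for every `k`. Since
`w ≠ 0` this recurrence determines `x` from `x 0`, and `e k = λ ^ k / w ^ (k (k + 1) / 2)` is its
solution with `e 0 = 1`, so every eigenvector is a multiple of `e`. Conversely `e` lies in every
`ℓ^p` with `1 ≤ p`: the ratio `‖e (k + 1)‖ / ‖e k‖ = ‖λ‖ / ‖w‖ ^ (k + 1)` tends to `0` because
`‖w‖ > 1`, so `e` is even summable.
-/

open scoped ENNReal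
open Filter Topology

lemma Nat.succ_mul_succ_succ_div_two (k : ℕ) :
    (k + 1) * (k + 2) / 2 = k * (k + 1) / 2 + (k + 1) := by
  rw [show (k + 1) * (k + 2) = k * (k + 1) + (k + 1) * 2 by ring,
    Nat.add_mul_div_right _ _ two_pos]

lemma eq_smul_of_mul_succ_eq {K : Type*} [Field K] {a : ℕ → K} {c : K} (ha : ∀ k, a k ≠ 0)
    {x y : ℕ → K} (hx : ∀ k, a k * x (k + 1) = c * x k) (hy : ∀ k, a k * y (k + 1) = c * y k)
    (hy0 : y 0 = 1) : x = x 0 • y := by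
  funext k
  induction k with
  | zero => simp [hy0]
  | succ k ih =>
    rw [Pi.smul_apply, smul_eq_mul] at ih ⊢
    rw [← mul_right_inj' (ha k), hx k, ih]
    linear_combination -x 0 * hy k

lemma summable_of_norm_succ_le_mul {E : Type*} [SeminormedAddCommGroup E] [CompleteSpace E]
    {x : ℕ → E} {c : ℕ → ℝ} (hc : Tendsto c atTop (𝓝 0))
    (hx : ∀ k, ‖x (k + 1)‖ ≤ c k * ‖x k‖) : Summable x := by
  refine summable_of_ratio_norm_eventually_le (r := 1 / 2) (by norm_num) ?_
  filter_upwards [hc.eventually_le_const (by norm_num : (0 : ℝ) < 1 / 2)] with k hck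
  exact (hx k).trans (mul_le_mul_of_nonneg_right hck (norm_nonneg _))

noncomputable def rolewiczEigenvector (w lam : ℂ) (k : ℕ) : ℂ :=
  lam ^ k / w ^ (k * (k + 1) / 2)

namespace rolewiczEigenvector

variable {w : ℂ} (lam : ℂ)

lemma zero : rolewiczEigenvector w lam 0 = 1 := by
  simp [rolewiczEigenvector]

lemma succ (hw : w ≠ 0) (k : ℕ) :
    rolewiczEigenvector w lam (k + 1) = lam * rolewiczEigenvector w lam k / w ^ (k + 1) := by
  simp only [rolewiczEigenvector]
  rw [Nat.succ_mul_succ_succ_div_two]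
  field_simp
  ring

lemma pow_mul_succ (hw : w ≠ 0) (k : ℕ) :
    w ^ (k + 1) * rolewiczEigenvector w lam (k + 1) = lam * rolewiczEigenvector w lam k := by
  rw [succ lam hw, mul_div_cancel₀ _ (pow_ne_zero _ hw)]

lemma summable (hw : 1 < ‖w‖) : Summable (rolewiczEigenvector w lam) := by
  have hw0 : w ≠ 0 := norm_pos_iff.mp (one_pos.trans hw)
  have hratio : Tendsto (fun k : ℕ ↦ ‖lam‖ / ‖w‖ ^ (k + 1)) atTop (𝓝 0) :=
    ((tendsto_pow_atTop_atTop_of_one_lt hw).comp (tendsto_add_atTop_nat 1)).const_div_atTop _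
  refine summable_of_norm_succ_le_mul hratio fun k ↦ le_of_eq ?_
  rw [succ lam hw0, norm_div, norm_mul, norm_pow]
  ring

lemma memℓp (hw : 1 < ‖w‖) {p : ℝ≥0∞} (hp : 1 ≤ p) : Memℓp (rolewiczEigenvector w lam) p :=
  (memℓp_gen (by simpa using (summable lam hw).norm)).of_exponent_ge hp

end rolewiczEigenvector

theorem rolewicz_lp_eigenspace_one_dimensional_general (w : ℂ) (hw : 1 < ‖w‖)
    (p : ℝ≥0∞) (hp : 1 ≤ p)
    (A : (ℕ → ℂ) → ℕ → ℂ) (hA : ∀ x k, A x k = w ^ (k + 1) * x (k + 1))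
    (lam : ℂ) :
    (∀ x : ℕ → ℂ, Memℓp x p → Memℓp (A x) p → A x = lam • x →
      ∀ k : ℕ, x k = x 0 * (lam ^ k / w ^ (k * (k + 1) / 2))) ∧
    {x : ℕ → ℂ | Memℓp x p ∧ Memℓp (A x) p ∧ A x = lam • x} =
      {x : ℕ → ℂ | ∃ c : ℂ, x = c • fun k : ℕ => lam ^ k / w ^ (k * (k + 1) / 2)} := by
  have hw0 : w ≠ 0 := norm_pos_iff.mp (one_pos.trans hw)
  have eigen_iff (x : ℕ → ℂ) : A x = lam • x ↔ ∀ k, w ^ (k + 1) * x (k + 1) = lam * x k := by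
    simp only [funext_iff, hA, Pi.smul_apply, smul_eq_mul]
  have eq_smul_of_eigen (x : ℕ → ℂ) (hx : A x = lam • x) :
      x = x 0 • rolewiczEigenvector w lam :=
    eq_smul_of_mul_succ_eq (fun k ↦ pow_ne_zero (k + 1) hw0) ((eigen_iff x).mp hx)
      (rolewiczEigenvector.pow_mul_succ lam hw0) (rolewiczEigenvector.zero lam)
  refine ⟨fun x _ _ hx k ↦ congrFun (eq_smul_of_eigen x hx) k, Set.ext fun x ↦ ⟨?_, ?_⟩⟩
  · rintro ⟨-, -, hx⟩
    exact ⟨x 0, eq_smul_of_eigen x hx⟩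
  · rintro ⟨c, rfl⟩
    have hmem : Memℓp (c • rolewiczEigenvector w lam) p :=
      (rolewiczEigenvector.memℓp lam hw hp).const_smul c
    have heigen : A (c • rolewiczEigenvector w lam) = lam • c • rolewiczEigenvector w lam := by
      refine (eigen_iff _).mpr fun k ↦ ?_
      simp only [Pi.smul_apply, smul_eq_mul]
      rw [mul_left_comm, rolewiczEigenvector.pow_mul_succ lam hw0, mul_left_comm]
    exact ⟨hmem, heigen ▸ hmem.const_smul lam, heigen⟩

/-- Let `w ∈ ℂ`, `|w| > 1`, `1 ≤ p < ∞`, `λ ∈ ℂ`. Every `x ∈ D(A)`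
with `Ax = λx` satisfies `x_k = x₁ · λ^{k-1} / w^{k(k-1)/2}` (1-based; 0-based:
`x k = x 0 * (λ^k / w^{k(k+1)/2})`, with `0⁰ = 1`); hence the eigenspace of the weighted
backward shift `A` (0-based: `A x k = w ^ (k+1) * x (k+1)`) associated with `λ` is the
one-dimensional subspace of `ℓ^p` spanned by `(λ^{k-1} / w^{k(k-1)/2})ₖ`. -/
theorem rolewicz_lp_eigenspace_one_dimensional (w : ℂ) (hw : 1 < ‖w‖)
    (p : ℝ≥0∞) (hp : 1 ≤ p) (hp' : p ≠ ∞)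
    (A : (ℕ → ℂ) → ℕ → ℂ) (hA : ∀ x k, A x k = w ^ (k + 1) * x (k + 1))
    (lam : ℂ) :
    (∀ x : ℕ → ℂ, Memℓp x p → Memℓp (A x) p → A x = lam • x →
      ∀ k : ℕ, x k = x 0 * (lam ^ k / w ^ (k * (k + 1) / 2))) ∧
    {x : ℕ → ℂ | Memℓp x p ∧ Memℓp (A x) p ∧ A x = lam • x} =
      {x : ℕ → ℂ | ∃ c : ℂ, x = c • fun k : ℕ => lam ^ k / w ^ (k * (k + 1) / 2)} :=
  rolewicz_lp_eigenspace_one_dimensional_general w hw p hp A hA lam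
end
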